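/- Let n be a positive integer and let g : ℝ → ℝ be a function that is concave on the open ray (−∞,1) and satisfies 0 ≤ g(λ) ≤ 1 for all λ < 1. Assume that the integral ∫_{−∞}^0 (1 − g(λ)^n) dλ is finite and that ∫_0^1 g(λ)^n dλ = ∫_{−∞}^0 (1 − g(λ)^n) dλ. Then for every real t > 0 one has g(−t) ≥ 1 − 1/√(n·t). -/

import Mathlib

open MeasureTheory Set

/-!
A concave function on `(−∞, 1)` that is bounded below cannot increase anywhere, so with
`c = g (-t)` we get `0 ≤ g ≤ c` on `(−t, 1)`. Hence the right-hand mass `∫₀¹ gⁿ` is at most `cⁿ`,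
while the left-hand deficit `∫_{−∞}^0 (1 − gⁿ)` is at least `t (1 − cⁿ)`, so `t / (1 + t) ≤ cⁿ`.
Bernoulli's inequality `(1 − e)ⁿ (1 + n e) ≤ 1` with `e = 1 / √(n t)` turns this into `c ≥ 1 − e`.
-/

variable {𝕜 : Type*} [Field 𝕜] [LinearOrder 𝕜] [IsStrictOrderedRing 𝕜]

/-- An increase `g u < g v` would, by concavity, force `g` below every bound far to the left. -/
theorem ConcaveOn.antitoneOn_Iio_of_bddBelow {a : 𝕜} {g : 𝕜 → 𝕜} (hg : ConcaveOn 𝕜 (Iio a) g)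
    (hbdd : BddBelow (g '' Iio a)) : AntitoneOn g (Iio a) := by
  obtain ⟨m, hm⟩ := hbdd
  intro u hu v hv huv
  by_contra! hincr
  have huv' : u < v := huv.lt_of_ne (by rintro rfl; exact hincr.false)
  set s := (g v - g u) / (v - u)
  have hs_pos : 0 < s := div_pos (sub_pos.2 hincr) (sub_pos.2 huv')
  have hmu : m ≤ g u := hm (mem_image_of_mem g hu)
  set x := u - (g u - m + 1) / s
  have hdist : u - x = (g u - m + 1) / s := by ring
  have hxu : x < u := by
    have : 0 < (g u - m + 1) / s := div_pos (by linarith) hs_pos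
    linarith
  have hslope : s ≤ (g u - g x) / (u - x) :=
    hg.slope_anti_adjacent (hxu.trans hu) hv hxu huv'
  rw [le_div_iff₀ (sub_pos.2 hxu), hdist, mul_div_cancel₀ _ hs_pos.ne'] at hslope
  have hmx : m ≤ g x := hm (mem_image_of_mem g (hxu.trans hu))
  linarith

theorem one_sub_pow_mul_one_add_mul_le_one {e : 𝕜} (he₀ : 0 ≤ e) (he₁ : e ≤ 1) (n : ℕ) :
    (1 - e) ^ n * (1 + n * e) ≤ 1 :=
  calc (1 - e) ^ n * (1 + n * e) ≤ (1 - e) ^ n * (1 + e) ^ n := by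
        gcongr
        exact one_add_mul_le_pow (by linarith) n
    _ = (1 - e * e) ^ n := by rw [← mul_pow]; ring
    _ ≤ 1 := pow_le_one₀ (by nlinarith) (by nlinarith)

theorem one_sub_one_div_sqrt_le_of_mul_one_sub_pow_le {n : ℕ} (hn : 0 < n) {t c : ℝ}
    (ht : 0 < t) (hc : 0 ≤ c) (h : t * (1 - c ^ n) ≤ c ^ n) :
    1 - 1 / Real.sqrt (n * t) ≤ c := by
  set e := 1 / Real.sqrt (n * t) with he
  have hnt : 0 < (n : ℝ) * t := mul_pos (Nat.cast_pos.2 hn) ht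
  have hroot : 0 < Real.sqrt (n * t) := Real.sqrt_pos.2 hnt
  have he₀ : 0 < e := by positivity
  by_contra! hlt
  have he₁ : e < 1 := by linarith
  have hbern := one_sub_pow_mul_one_add_mul_le_one he₀.le he₁.le n
  have hpow : c ^ n ≤ (1 - e) ^ n := pow_le_pow_left₀ hc hlt.le n
  have hmass : t ≤ (1 - e) ^ n * (1 + t) :=
    calc t ≤ c ^ n * (1 + t) := by linarith
      _ ≤ (1 - e) ^ n * (1 + t) := by gcongr
  have hkey : t * (1 + n * e) ≤ 1 + t :=
    calc t * (1 + n * e) ≤ (1 - e) ^ n * (1 + t) * (1 + n * e) := by gcongr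
      _ = (1 - e) ^ n * (1 + n * e) * (1 + t) := by ring
      _ ≤ 1 + t := by nlinarith
  have hnte : t * (n * e) = Real.sqrt (n * t) := by
    rw [he]
    field_simp
    rw [Real.sq_sqrt (by positivity)]
  have hroot_gt : 1 < Real.sqrt (n * t) := (div_lt_one hroot).1 he₁
  linarith

/-- Normalized analytic form of Lemma 4.12: if `g` is concave on `(−∞,1)` with values in
`[0,1]` there, the integral `∫_{−∞}^0 (1 − g^n)` is finite and equals `∫_0^1 g^n`, then
`g(−t) ≥ 1 − 1/√(nt)` for all `t > 0`. -/
theorem normalized_tail_estimate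
    (n : ℕ) (hn : 0 < n) (g : ℝ → ℝ)
    (hconc : ConcaveOn ℝ (Set.Iio 1) g)
    (hbound : ∀ lam : ℝ, lam < 1 → 0 ≤ g lam ∧ g lam ≤ 1)
    (hint : IntegrableOn (fun lam => 1 - g lam ^ n) (Set.Iio 0))
    (heq : ∫ lam in (0:ℝ)..1, g lam ^ n = ∫ lam in Set.Iio 0, (1 - g lam ^ n)) :
    ∀ t : ℝ, 0 < t → 1 - 1 / Real.sqrt ((n : ℝ) * t) ≤ g (-t) := by
  intro t ht
  have hanti : AntitoneOn g (Iio 1) :=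
    hconc.antitoneOn_Iio_of_bddBelow ⟨0, by rintro _ ⟨x, hx, rfl⟩; exact (hbound x hx).1⟩
  have hpow_mem : ∀ x ∈ Ioo (-t) 1, 0 ≤ g x ^ n ∧ g x ^ n ≤ g (-t) ^ n := fun x hx =>
    ⟨pow_nonneg (hbound x hx.2).1 n,
      pow_le_pow_left₀ (hbound x hx.2).1 (hanti (mem_Iio.2 (by linarith)) hx.2 hx.1.le) n⟩
  have hright : ∫ x in (0:ℝ)..1, g x ^ n ≤ g (-t) ^ n := by
    have := intervalIntegral.norm_integral_le_of_norm_le_const_ae (a := 0) (b := 1)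
      (C := g (-t) ^ n) (f := fun x => g x ^ n) <| by
      filter_upwards [volume.ae_ne 1] with x hx1 hx
      rw [uIoc_of_le zero_le_one] at hx
      obtain ⟨h0, hle⟩ := hpow_mem x ⟨by linarith [hx.1], lt_of_le_of_ne hx.2 hx1⟩
      rwa [Real.norm_of_nonneg h0]
    simpa using (le_abs_self _).trans this
  have hleft : t * (1 - g (-t) ^ n) ≤ ∫ x in Iio 0, (1 - g x ^ n) :=
    calc t * (1 - g (-t) ^ n) = (1 - g (-t) ^ n) * volume.real (Ioo (-t) 0) := by
          simp [Real.volume_real_Ioo, ht.le, mul_comm]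
      _ ≤ ∫ x in Ioo (-t) 0, (1 - g x ^ n) :=
          setIntegral_ge_of_const_le_real measurableSet_Ioo measure_Ioo_lt_top.ne
            (fun x hx => by linarith [(hpow_mem x ⟨hx.1, hx.2.trans one_pos⟩).2])
            (hint.mono_set Ioo_subset_Iio_self)
      _ ≤ ∫ x in Iio 0, (1 - g x ^ n) := by
          refine setIntegral_mono_set hint ?_ Ioo_subset_Iio_self.eventuallyLE
          filter_upwards [ae_restrict_mem measurableSet_Iio] with x hx
          obtain ⟨h0, h1⟩ := hbound x (hx.trans one_pos)
          exact sub_nonneg.2 (pow_le_one₀ h0 h1)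
  exact one_sub_one_div_sqrt_le_of_mul_one_sub_pow_le hn ht (hbound (-t) (by linarith)).1
    (hleft.trans (heq ▸ hright))
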